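/- arXiv:1411.2127 — 4 statements merged into one kernel-verified Lean document; each statement's English description precedes it below -/
import Mathlib

section
/- If 𝛂 is a proper set of directed paths in a finite directed acyclic graph G, then for any directed edge (W→Y) of G, the set of paths ◁_{(WY)}(𝛂) obtained by applying the funnel operator for (W→Y) to 𝛂 is proper. -/
open scoped Classical
open MeasureTheory

namespace CausalHierarchy

variable {V : Type}

/-- A directed path in a directed graph with edge relation `edge`:
a nonempty list of vertices in which each consecutive pair is joined by an edge. -/
structure DiPath (edge : V → V → Prop) : Type where
  verts : List V
  ne : verts ≠ []
  chain : verts.Chain' edge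

namespace DiPath

variable {edge : V → V → Prop}

/-- The source (first vertex) of a directed path. -/
def src (p : DiPath edge) : V := p.verts.head p.ne

/-- The sink (last vertex) of a directed path. -/
def sink (p : DiPath edge) : V := p.verts.getLast p.ne

/-- The second vertex of a directed path (junk value for single-vertex paths). -/
def snd2 (p : DiPath edge) : V := p.verts.tail.headD p.src

/-- The first edge of a directed path, as an ordered pair of vertices. -/
def firstEdge (p : DiPath edge) : V × V := (p.src, p.snd2)

/-- `q` is a (contiguous) subpath of `p`. -/
def Subpath (q p : DiPath edge) : Prop := ∃ l r, p.verts = l ++ q.verts ++ r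

/-- `q` is a prefix subpath of `p`. -/
def IsPrefix (q p : DiPath edge) : Prop := q.verts <+: p.verts

/-- `q` is a suffix subpath of `p`. -/
def IsSuffix (q p : DiPath edge) : Prop := q.verts <:+ p.verts

end DiPath

/-- A directed graph is acyclic if its transitive closure is irreflexive. -/
def Acyclic (edge : V → V → Prop) : Prop := Irreflexive (Relation.TransGen edge)

theorem Acyclic.wf [Finite V] {edge : V → V → Prop} (h : Acyclic edge) :
    WellFounded (Relation.TransGen edge) := by
  have h1 : IsIrrefl V (Relation.TransGen edge) := ⟨h⟩
  have h2 : IsTrans V (Relation.TransGen edge) := ⟨fun _ _ _ => Relation.TransGen.trans⟩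
  exact Finite.wellFounded_of_trans_of_irrefl _

/-- A set of directed paths is proper if no path in it is a prefix subpath of another. -/
def Proper {edge : V → V → Prop} (A : Set (DiPath edge)) : Prop :=
  ∀ p ∈ A, ∀ q ∈ A, p.IsPrefix q → p = q

/-- `rel edge Y A`: the directed paths relevant for `Y` given `A`: paths with sink in `Y`
such that no member of `A` is a subpath, except possibly a prefix subpath. -/
def rel (edge : V → V → Prop) (Y : Set V) (A : Set (DiPath edge)) : Set (DiPath edge) :=
  {α | α.sink ∈ Y ∧ ∀ β ∈ A, β.Subpath α → β.IsPrefix α}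

/-- A path `α` is live for `Y` given `A` if some relevant path has it as a prefix. -/
def Live (edge : V → V → Prop) (Y : Set V) (A : Set (DiPath edge)) (α : DiPath edge) : Prop :=
  ∃ p ∈ rel edge Y A, α.IsPrefix p

/-- The set of members of `A` live for `Y` given `A`. -/
def liveSub (edge : V → V → Prop) (Y : Set V) (A : Set (DiPath edge)) : Set (DiPath edge) :=
  {α ∈ A | Live edge Y A α}

/-- `A` is live for `Y` if every member of `A` is live for `Y` given `A`. -/
def LiveSet (edge : V → V → Prop) (Y : Set V) (A : Set (DiPath edge)) : Prop :=
  ∀ α ∈ A, Live edge Y A α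

/-- The funnel operator for the edge `(w,y)`: paths of the form `(a,…,w,y)` are truncated
to `(a,…,w)`, paths containing `w` not ending with the edge `(w,y)` are removed, and other
paths are kept unchanged. -/
def funnel {edge : V → V → Prop} (w y : V) (A : Set (DiPath edge)) : Set (DiPath edge) :=
  {q | (q ∈ A ∧ w ∉ q.verts) ∨ (q.sink = w ∧ ∃ p ∈ A, p.verts = q.verts ++ [y])}

/-- `alphaSet edge A Y`: all directed paths (with at least one edge) with source in `A`,
sink in `A ∪ Y`, and not intersecting `A ∪ Y` except at the source and sink. -/
def alphaSet (edge : V → V → Prop) (A Y : Set V) : Set (DiPath edge) :=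
  {p | 2 ≤ p.verts.length ∧ p.src ∈ A ∧ p.sink ∈ A ∪ Y ∧
       ∀ l₁ v l₂, p.verts = l₁ ++ v :: l₂ → v ∈ A ∪ Y → l₁ = [] ∨ l₂ = []}

/-- The set of first edges of the (nontrivial) paths in `A`. -/
def firstEdges {edge : V → V → Prop} (A : Set (DiPath edge)) : Set (V × V) :=
  {e | ∃ p ∈ A, 2 ≤ p.verts.length ∧ e = p.firstEdge}

/-- A causal structure for the graph `(V, edge)` with state spaces `X`: a probability space
together with, for each vertex `v` and assignment of values to its parents, a random
variable (the one-step-ahead potential outcome).  The function `f v` takes a full tuple of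
values but depends only on the coordinates of parents of `v`. -/
structure CausalStructure (V : Type) (edge : V → V → Prop) (X : V → Type) : Type 1 where
  Ω : Type
  m : MeasurableSpace Ω
  μ : @MeasureTheory.Measure Ω m
  prob : μ Set.univ = 1
  f : (v : V) → ((w : V) → X w) → Ω → X v
  localDep : ∀ v x y, (∀ w, edge w v → x w = y w) → f v x = f v y

variable {X : V → Type}

/-- The natural (observed) variable of each vertex, obtained by recursive substitution with
no intervention. -/
noncomputable def observed [Finite V] {edge : V → V → Prop} [∀ v, Nonempty (X v)]
    (hG : Acyclic edge) (C : CausalStructure V edge X) (v : V) : C.Ω → X v :=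
  hG.wf.fix (C := fun u => C.Ω → X u)
    (fun v IH ω => C.f v (fun w =>
      if h : Relation.TransGen edge w v then IH w h ω else Classical.arbitrary (X w)) ω) v

/-- The response to the node intervention setting the vertices of `A` to the values `a`,
defined by recursive substitution. -/
noncomputable def nodeResp [Finite V] {edge : V → V → Prop} [∀ v, Nonempty (X v)]
    (hG : Acyclic edge) (C : CausalStructure V edge X)
    (A : Set V) (a : ∀ u, X u) (v : V) : C.Ω → X v :=
  hG.wf.fix (C := fun u => C.Ω → X u)
    (fun v IH ω => C.f v (fun w =>
      if w ∈ A then a w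
      else if h : Relation.TransGen edge w v then IH w h ω
      else Classical.arbitrary (X w)) ω) v

/-- The response to the edge intervention assigning, to each edge `e ∈ E`, the value
`aE e e.1` (a value in the state space of the source of `e`), defined by recursive
substitution. -/
noncomputable def edgeResp [Finite V] {edge : V → V → Prop} [∀ v, Nonempty (X v)]
    (hG : Acyclic edge) (C : CausalStructure V edge X)
    (E : Set (V × V)) (aE : V × V → ∀ u, X u) (v : V) : C.Ω → X v :=
  hG.wf.fix (C := fun u => C.Ω → X u)
    (fun v IH ω => C.f v (fun w =>
      if (w, v) ∈ E then aE (w, v) w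
      else if h : Relation.TransGen edge w v then IH w h ω
      else Classical.arbitrary (X w)) ω) v

/-- The funneled path assignment: the truncation of a path of `A` by the funnel operator for
`(w,y)` receives the value assigned to the original path; other paths keep their values. -/
noncomputable def funnelAssign {edge : V → V → Prop} (w y : V) (A : Set (DiPath edge))
    (a : DiPath edge → ∀ u, X u) (q : DiPath edge) : ∀ u, X u :=
  if h : q.sink = w ∧ ∃ p ∈ A, p.verts = q.verts ++ [y] then a h.2.choose else a q

/-- The response to the path intervention assigning, to each directed path `p ∈ A`, the
value `a p p.src` (a value in the state space of the source of `p`), defined by recursive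
substitution via the funnel operator. -/
noncomputable def pathResp [Finite V] {edge : V → V → Prop} [∀ v, Nonempty (X v)]
    (hG : Acyclic edge) (C : CausalStructure V edge X)
    (A : Set (DiPath edge)) (a : DiPath edge → ∀ u, X u) (v : V) : C.Ω → X v :=
  hG.wf.fix (C := fun u => Set (DiPath edge) → (DiPath edge → ∀ z, X z) → C.Ω → X u)
    (fun v IH A a ω => C.f v (fun w =>
      if h : ∃ p ∈ A, p.verts = [w, v] then a h.choose w
      else if hw : Relation.TransGen edge w v then
        IH w hw (funnel w v A) (funnelAssign w v A a) ω
      else Classical.arbitrary (X w)) ω) v A a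

/-- The response to the path intervention in which the paths of `Astar ⊆ A` are assigned
the constant values `a`, and the paths of `A ∖ Astar` are assigned the natural values of
their sources, defined by recursive substitution via the funnel operator. -/
noncomputable def pathRespNat [Finite V] {edge : V → V → Prop} [∀ v, Nonempty (X v)]
    (hG : Acyclic edge) (C : CausalStructure V edge X)
    (A Astar : Set (DiPath edge)) (a : DiPath edge → ∀ u, X u) (v : V) : C.Ω → X v :=
  hG.wf.fix (C := fun u =>
      Set (DiPath edge) → Set (DiPath edge) → (DiPath edge → ∀ z, X z) → C.Ω → X u)
    (fun v IH A Astar a ω => C.f v (fun w =>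
      if h : ∃ p ∈ A, p.verts = [w, v] then
        (if h.choose ∈ Astar then a h.choose w else observed hG C w ω)
      else if hw : Relation.TransGen edge w v then
        IH w hw (funnel w v A) (funnel w v Astar) (funnelAssign w v A a) ω
      else Classical.arbitrary (X w)) ω) v A Astar a

/-- The observed distribution `p(𝐕)`, as a probability mass function. -/
noncomputable def obsDist [Finite V] {edge : V → V → Prop} [∀ v, Nonempty (X v)]
    (hG : Acyclic edge) (C : CausalStructure V edge X) : (∀ v, X v) → ENNReal :=
  fun s => C.μ {ω | ∀ v, observed hG C v ω = s v}

/-- The single world model (Robins' FFRCISTG model): for every joint value assignment `x`,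
the one-step-ahead variables `{V(x_{pa(V)}) : V ∈ 𝐕}` are mutually independent. -/
def SWM {edge : V → V → Prop} (C : CausalStructure V edge X) : Prop :=
  ∀ x : ∀ u, X u, ∀ (S : Finset V) (s : ∀ u, X u),
    C.μ {ω | ∀ v ∈ S, C.f v x ω = s v} = ∏ v ∈ S, C.μ {ω | C.f v x ω = s v}

/-- The multiple worlds model (Pearl's NPSEM-IE): the families
`{V(x) : x an assignment to pa(V)}`, one family per vertex, are mutually independent. -/
def MWM {edge : V → V → Prop} (C : CausalStructure V edge X) : Prop :=
  ∀ (S : Finset V) (g : ∀ v, ((∀ u, X u) → X v)),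
    C.μ {ω | ∀ v ∈ S, (fun x => C.f v x ω) = g v} =
      ∏ v ∈ S, C.μ {ω | (fun x => C.f v x ω) = g v}

/-- The conditional probability `p(val | values c of the parents of v)` of the observed
distribution. -/
noncomputable def condProb [Finite V] {edge : V → V → Prop} [∀ v, Nonempty (X v)]
    (hG : Acyclic edge) (C : CausalStructure V edge X)
    (v : V) (val : X v) (c : ∀ u, X u) : ENNReal :=
  C.μ {ω | observed hG C v ω = val ∧ ∀ w, edge w v → observed hG C w ω = c w} /
    C.μ {ω | ∀ w, edge w v → observed hG C w ω = c w}

/-- A response distribution `R` is identified from `p(𝐕)` under the model `M` if any two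
causal structures in `M` with the same observed distribution give it the same value. -/
def Identified [Finite V] {edge : V → V → Prop} [∀ v, Nonempty (X v)] (hG : Acyclic edge)
    (M : CausalStructure V edge X → Prop)
    (R : CausalStructure V edge X → (∀ v, X v) → ENNReal) : Prop :=
  ∀ C₁ C₂, M C₁ → M C₂ → obsDist hG C₁ = obsDist hG C₂ → R C₁ = R C₂

/-- Paths relevant for `Y` given a set of edges `E`: sink in `Y` and no edge of `E` occurs
in the path except possibly as the first edge. -/
def relE (edge : V → V → Prop) (Y : Set V) (E : Set (V × V)) : Set (DiPath edge) :=
  {p | p.sink ∈ Y ∧ ∀ l₁ w v l₂, p.verts = l₁ ++ w :: v :: l₂ → (w, v) ∈ E → l₁ = []}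

/-- A set of edges is live for `Y` if each of its edges begins some relevant path. -/
def LiveE (edge : V → V → Prop) (Y : Set V) (E : Set (V × V)) : Prop :=
  ∀ e ∈ E, ∃ p ∈ relE edge Y E, ∃ l, p.verts = e.1 :: e.2 :: l

/-- A set of edges live for `Y` is consistent for `Y` if for every vertex `a`, the set of
first edges of relevant paths with source `a` is contained in `E` or disjoint from `E`. -/
def ConsistentE (edge : V → V → Prop) (Y : Set V) (E : Set (V × V)) : Prop :=
  ∀ a : V, (∀ p ∈ relE edge Y E, ∀ b l, p.verts = a :: b :: l → (a, b) ∈ E) ∨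
           (∀ p ∈ relE edge Y E, ∀ b l, p.verts = a :: b :: l → (a, b) ∉ E)

/-- An edge intervention is node consistent for `Y` if its edge set is live and consistent
for `Y` and all edges sharing a source are assigned the same value. -/
def NodeConsistent {X : V → Type} (edge : V → V → Prop) (Y : Set V) (E : Set (V × V))
    (aE : V × V → ∀ u, X u) : Prop :=
  LiveE edge Y E ∧ ConsistentE edge Y E ∧
    ∀ e ∈ E, ∀ e' ∈ E, e.1 = e'.1 → aE e e.1 = aE e' e.1

/-- A proper set of paths live for `Y` is consistent for `Y` if whenever the first edge of
some path of `A` occurs in a relevant path `β`, it is the first edge of a prefix subpath of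
`β` belonging to `A`. -/
def ConsistentP (edge : V → V → Prop) (Y : Set V) (A : Set (DiPath edge)) : Prop :=
  ∀ a b : V, (∃ p ∈ A, ∃ l, p.verts = a :: b :: l) →
    ∀ β ∈ rel edge Y A, (∃ l₁ l₂, β.verts = l₁ ++ a :: b :: l₂) →
      ∃ q ∈ A, q.IsPrefix β ∧ ∃ l', q.verts = a :: b :: l'

/-- A path intervention is edge consistent for `Y` if its path set is live and consistent
for `Y` and all paths sharing the same first edge are assigned the same value. -/
def EdgeConsistentP {X : V → Type} (edge : V → V → Prop) (Y : Set V)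
    (A : Set (DiPath edge)) (a : DiPath edge → ∀ u, X u) : Prop :=
  LiveSet edge Y A ∧ ConsistentP edge Y A ∧
    ∀ p ∈ A, ∀ q ∈ A, p.firstEdge = q.firstEdge → a p p.src = a q p.src

/-- A directed path of a graph is a directed path of any supergraph. -/
def liftPath {edge edge' : V → V → Prop} (h : ∀ a b, edge a b → edge' a b)
    (p : DiPath edge) : DiPath edge' :=
  ⟨p.verts, p.ne, p.chain.imp (fun {a b} hab => h a b hab)⟩

namespace DiPath

variable {edge : V → V → Prop}

lemma verts_injective : Function.Injective (verts : DiPath edge → List V) := by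
  rintro ⟨_, _, _⟩ ⟨_, _, _⟩ rfl
  rfl

lemma sink_mem_verts (p : DiPath edge) : p.sink ∈ p.verts :=
  List.getLast_mem p.ne

lemma nodup_verts (hG : Acyclic edge) (p : DiPath edge) : p.verts.Nodup := by
  have : IsTrans V (Relation.TransGen edge) := ⟨fun _ _ _ => Relation.TransGen.trans⟩
  have hpair : p.verts.Pairwise (Relation.TransGen edge) :=
    List.isChain_iff_pairwise.mp (p.chain.imp fun _ _ => Relation.TransGen.single)
  exact hpair.imp fun {a _} hab => by rintro rfl; exact hG a hab

/-- A path in a DAG visits its sink only once. -/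
lemma eq_of_isPrefix_of_sink_eq (hG : Acyclic edge) {p q : DiPath edge}
    (hpq : p.IsPrefix q) (hsink : p.sink = q.sink) : p = q := by
  obtain ⟨t, ht⟩ := hpq
  by_cases ht_nil : t = []
  · subst ht_nil
    exact verts_injective (by simpa using ht)
  · have hnodup : (p.verts ++ t).Nodup := ht ▸ q.nodup_verts hG
    have hsink_t : q.sink = t.getLast ht_nil := by
      rw [sink, List.getLast_congr _ _ ht.symm]
      exact List.getLast_append_right ht_nil
    have hmem : t.getLast ht_nil ∈ p.verts := by
      rw [← hsink_t, ← hsink]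
      exact p.sink_mem_verts
    exact absurd (List.getLast_mem ht_nil) (List.disjoint_of_nodup_append hnodup hmem)

end DiPath

theorem proper_funnel_general {V : Type} {edge : V → V → Prop}
    (hG : Acyclic edge) {w y : V}
    {A : Set (DiPath edge)} (hA : Proper A) :
    Proper (funnel w y A) := by
  rintro p (⟨hpA, -⟩ | ⟨hpw, -⟩) q (⟨hqA, hqw⟩ | ⟨hqw, q', hq'A, hq'⟩) hpq
  · exact hA p hpA q hqA hpq
  · -- `p` is a prefix of the funnelled path `q'`, one vertex longer than `q`
    have hpq' : p = q' := hA p hpA q' hq'A (hpq.trans ⟨[y], hq'.symm⟩)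
    have hlen := hpq.length_le
    rw [hpq', hq', List.length_append] at hlen
    simp at hlen
  · exact absurd (hpq.subset (hpw ▸ p.sink_mem_verts)) hqw
  · exact DiPath.eq_of_isPrefix_of_sink_eq hG hpq (hpw.trans hqw.symm)

/-- the funnel operator for an edge of `G` preserves properness. -/
theorem proper_funnel {V : Type} [Fintype V] {edge : V → V → Prop}
    (hG : Acyclic edge) {w y : V} (hwy : edge w y)
    {A : Set (DiPath edge)} (hA : Proper A) :
    Proper (funnel w y A) :=
  proper_funnel_general hG hA

end CausalHierarchy
end

section
/- Given a finite directed acyclic graph G with vertices 𝐕 and an edge intervention η_{𝔞_𝛂} that is node consistent for a vertex set 𝐘 ⊆ 𝐕, in every causal structure for G the joint distribution of the responses {Y(𝔞_𝛂) : Y ∈ 𝐘} to the edge intervention equals the joint distribution of the potential outcomes {Y(𝐚_𝛂) : Y ∈ 𝐘} under the induced node intervention ν_{𝐚_𝛂}. -/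
open scoped Classical
open MeasureTheory

namespace CausalHierarchy

variable {V : Type}

variable {X : V → Type}

private lemma chain'_of_split {R : V → V → Prop} {l l₁ l₂ : List V} {a b : V}
    (h : l.Chain' R) (he : l = l₁ ++ a :: b :: l₂) : R a b := by
  have hinf : [a, b] <:+: l := ⟨l₁, l₂, by simpa using he.symm⟩
  have := h.infix hinf
  simpa using this

private lemma edgeResp_eq [Finite V] {edge : V → V → Prop} [∀ v, Nonempty (X v)]
    (hG : Acyclic edge) (C : CausalStructure V edge X)
    (E : Set (V × V)) (aE : V × V → ∀ u, X u) (v : V) (ω : C.Ω) :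
    edgeResp hG C E aE v ω = C.f v (fun w =>
      if (w, v) ∈ E then aE (w, v) w
      else if h : Relation.TransGen edge w v then edgeResp hG C E aE w ω
      else Classical.arbitrary (X w)) ω := by
  conv_lhs => rw [edgeResp, WellFounded.fix_eq]
  rfl

private lemma nodeResp_eq [Finite V] {edge : V → V → Prop} [∀ v, Nonempty (X v)]
    (hG : Acyclic edge) (C : CausalStructure V edge X)
    (A : Set V) (a : ∀ u, X u) (v : V) (ω : C.Ω) :
    nodeResp hG C A a v ω = C.f v (fun w =>
      if w ∈ A then a w
      else if h : Relation.TransGen edge w v then nodeResp hG C A a w ω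
      else Classical.arbitrary (X w)) ω := by
  conv_lhs => rw [nodeResp, WellFounded.fix_eq]
  rfl

private lemma key [Finite V] {edge : V → V → Prop} [∀ v, Nonempty (X v)]
    (hG : Acyclic edge)
    (Y : Set V) (E : Set (V × V))
    (aE : V × V → ∀ u, X u) (hnc : NodeConsistent edge Y E aE)
    (aN : ∀ u, X u) (haN : ∀ e ∈ E, aN e.1 = aE e e.1)
    (C : CausalStructure V edge X) (ω : C.Ω) :
    ∀ v : V, (∃ l, List.Chain' edge (v :: l) ∧
        (v :: l).getLast (List.cons_ne_nil _ _) ∈ Y ∧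
        List.Chain' (fun a b => (a, b) ∉ E) (v :: l)) →
      edgeResp hG C E aE v ω = nodeResp hG C {v | ∃ e ∈ E, e.1 = v} aN v ω := by
  obtain ⟨hlive, hcons, -⟩ := hnc
  intro v
  induction v using hG.wf.induction with
  | _ v IH =>
    rintro ⟨l, hch, hlast, hnoE⟩
    rw [edgeResp_eq, nodeResp_eq]
    refine congrFun (C.localDep v _ _ fun w hwv => ?_) ω
    by_cases hwE : (w, v) ∈ E
    · have hwA : w ∈ {v | ∃ e ∈ E, e.1 = v} := ⟨(w, v), hwE, rfl⟩
      simp only [hwE, if_true, hwA, if_true]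
      exact (haN (w, v) hwE).symm
    · have htg : Relation.TransGen edge w v := Relation.TransGen.single hwv
      have hwA : w ∉ {v | ∃ e ∈ E, e.1 = v} := by
        rintro ⟨⟨a, b⟩, heE, rfl⟩
        -- build the relevant path a :: v :: l
        have hchain : List.Chain' edge (a :: v :: l) := List.isChain_cons_cons.mpr ⟨hwv, hch⟩
        set β : DiPath edge := ⟨a :: v :: l, List.cons_ne_nil _ _, hchain⟩ with hβ
        have hnoE' : List.Chain' (fun x y => (x, y) ∉ E) (a :: v :: l) :=
          List.isChain_cons_cons.mpr ⟨hwE, hnoE⟩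
        have hβrel : β ∈ relE edge Y E := by
          refine ⟨?_, ?_⟩
          · show (a :: v :: l).getLast _ ∈ Y
            rw [List.getLast_cons (List.cons_ne_nil _ _)]
            exact hlast
          · intro l₁ a b l₂ hsplit habE
            exact absurd habE (chain'_of_split hnoE' hsplit)
        rcases hcons a with h1 | h2
        · exact hwE (h1 β hβrel v l rfl)
        · obtain ⟨p, hp, l', hp'⟩ := hlive (a, b) heE
          exact h2 p hp b l' hp' heE
      simp only [hwE, if_false, hwA, if_false, htg, dif_pos]
      refine IH w htg ⟨v :: l, List.isChain_cons_cons.mpr ⟨hwv, hch⟩, ?_,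
        List.isChain_cons_cons.mpr ⟨hwE, hnoE⟩⟩
      rw [List.getLast_cons (List.cons_ne_nil _ _)]
      exact hlast


/-- the responses of `𝐘` to an edge intervention node consistent for `𝐘` have
the same joint distribution as the potential outcomes under the induced node
intervention. -/
theorem node_consistent_edge_eq_node {V : Type} [Fintype V] {X : V → Type}
    [∀ v, Nonempty (X v)] {edge : V → V → Prop} (hG : Acyclic edge)
    (Y : Set V) (E : Set (V × V)) (hE : ∀ e ∈ E, edge e.1 e.2)
    (aE : V × V → ∀ u, X u) (hnc : NodeConsistent edge Y E aE)
    (aN : ∀ u, X u) (haN : ∀ e ∈ E, aN e.1 = aE e e.1)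
    (C : CausalStructure V edge X) :
    ∀ s : ∀ u, X u,
      C.μ {ω | ∀ y ∈ Y, edgeResp hG C E aE y ω = s y} =
        C.μ {ω | ∀ y ∈ Y, nodeResp hG C {v | ∃ e ∈ E, e.1 = v} aN y ω = s y} := by
  intro s
  congr 1
  ext ω
  simp only [Set.mem_setOf_eq]
  constructor <;> intro h y hy <;>
    have hk := key hG Y E aE hnc aN haN C ω y
      ⟨[], List.isChain_singleton y, hy, List.isChain_singleton y⟩
  · rw [← hk]; exact h y hy
  · rw [hk]; exact h y hy


end CausalHierarchy
end

section
/- Let G be the directed acyclic graph with two vertices and a single edge A→B, with both state spaces equal to {0,1}, and let a ≠ a' be the two values of A. Then there exist two causal structures in the multiple worlds model (MWM) for G having identical observed joint distributions of (A, B) but different joint distributions of the pair of potential outcomes (B(a), B(a')); similarly, there exist two such structures with identical observed joint distributions of (A, B) but different joint distributions of (B(a), B). Consequently, p(B(a), B(a')) and p(B(a), B) are not identified from p(A, B) under the MWM for G. -/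
open scoped Classical
open MeasureTheory

namespace CausalHierarchy

variable {V : Type}

variable {X : V → Type}

/-- The graph with vertices `A = 0`, `B = 1` and the single edge `A → B`. -/
def edgeAB : Fin 2 → Fin 2 → Prop := fun i j => i = 0 ∧ j = 1

theorem edgeAB_acyclic : Acyclic edgeAB := by
  intro x hx
  have h0 : ∀ y, Relation.TransGen edgeAB x y → x = 0 := by
    intro y hy
    induction hy with
    | single h => exact h.1
    | tail _ _ ih => exact ih
  have h1 : x = 1 := by
    cases hx with
    | single h => exact h.2
    | tail _ h => exact h.2
  rw [h0 x hx] at h1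
  exact absurd h1 (by decide)

/-- The joint distribution of the pair of potential outcomes `(B(a), B(a'))`. -/
noncomputable def jointBB (a a' : Fin 2)
    (C : CausalStructure (Fin 2) edgeAB (fun _ => Fin 2)) : Fin 2 × Fin 2 → ENNReal :=
  fun st => C.μ {ω | nodeResp edgeAB_acyclic C {0} (fun _ => a) 1 ω = st.1 ∧
    nodeResp edgeAB_acyclic C {0} (fun _ => a') 1 ω = st.2}

/-- The joint distribution of `(B(a), B)` where `B` is the natural variable. -/
noncomputable def jointBnat (a : Fin 2)
    (C : CausalStructure (Fin 2) edgeAB (fun _ => Fin 2)) : Fin 2 × Fin 2 → ENNReal :=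
  fun st => C.μ {ω | nodeResp edgeAB_acyclic C {0} (fun _ => a) 1 ω = st.1 ∧
    observed edgeAB_acyclic C 1 ω = st.2}

/-!
`A` is a fair coin and `B = A + U` (mod 2) with an independent fair coin `U`; alternatively
`B = U`. Since `A + U` is again a fair coin independent of `A`, both structures have the uniform
observed distribution on `(A, B)`, and both satisfy the MWM because the families of `A` and of
`B` are functions of the independent coordinates `A` and `U`. In the first structure
`B(a') = B(a) + 1` and `B = B(a)` exactly when `A = a`; in the second `B(a) = B(a') = B`.
-/

section Recursion

variable [Finite V] {edge : V → V → Prop} [∀ v, Nonempty (X v)]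
  (hG : Acyclic edge) (C : CausalStructure V edge X)

theorem observed_eq_of_parents {v : V} (x : ∀ w, X w) (ω : C.Ω)
    (hx : ∀ w, edge w v → x w = observed hG C w ω) : observed hG C v ω = C.f v x ω := by
  conv_lhs => rw [observed, WellFounded.fix_eq]
  refine congrFun (C.localDep v _ _ fun w hw => ?_) ω
  rw [dif_pos (.single hw)]
  exact (hx w hw).symm

theorem nodeResp_eq_of_parents {A : Set V} {a : ∀ u, X u} {v : V} (x : ∀ w, X w) (ω : C.Ω)
    (hx : ∀ w, edge w v → x w = if w ∈ A then a w else nodeResp hG C A a w ω) :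
    nodeResp hG C A a v ω = C.f v x ω := by
  conv_lhs => rw [nodeResp, WellFounded.fix_eq]
  refine congrFun (C.localDep v _ _ fun w hw => ?_) ω
  rw [hx w hw, dif_pos (.single hw)]
  rfl

end Recursion

theorem mwm_of_indep_fin_two {edge : Fin 2 → Fin 2 → Prop} {X : Fin 2 → Type}
    (C : CausalStructure (Fin 2) edge X)
    (h : ∀ (g₀ : (∀ u, X u) → X 0) (g₁ : (∀ u, X u) → X 1),
      C.μ {ω | (fun x => C.f 0 x ω) = g₀ ∧ (fun x => C.f 1 x ω) = g₁} =
        C.μ {ω | (fun x => C.f 0 x ω) = g₀} * C.μ {ω | (fun x => C.f 1 x ω) = g₁}) :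
    MWM C := by
  intro S g
  have hS : S = ∅ ∨ S = {0} ∨ S = {1} ∨ S = {0, 1} := by revert S; decide
  rcases hS with rfl | rfl | rfl | rfl
  · simpa using C.prob
  · simp
  · simp
  · simpa using h (g 0) (g 1)

theorem Measure.prod_setOf_fst_and_snd {α β : Type*} [MeasurableSpace α] [MeasurableSpace β]
    (μ : Measure α) (ν : Measure β) [IsProbabilityMeasure μ] [IsProbabilityMeasure ν]
    (P : α → Prop) (Q : β → Prop) :
    (μ.prod ν) {ω | P ω.1 ∧ Q ω.2} =
      (μ.prod ν) {ω | P ω.1} * (μ.prod ν) {ω | Q ω.2} := by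
  have hP : {ω : α × β | P ω.1} = {a | P a} ×ˢ Set.univ := by ext; simp
  have hQ : {ω : α × β | Q ω.2} = Set.univ ×ˢ {b | Q b} := by ext; simp
  change (μ.prod ν) ({a | P a} ×ˢ {b | Q b}) = _
  rw [hP, hQ, Measure.prod_prod, Measure.prod_prod, Measure.prod_prod]
  simp

noncomputable def noiseStructure (μA μU : Measure (Fin 2)) [IsProbabilityMeasure μA]
    [IsProbabilityMeasure μU] (g : Fin 2 → Fin 2 → Fin 2) :
    CausalStructure (Fin 2) edgeAB (fun _ => Fin 2) where
  Ω := Fin 2 × Fin 2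
  m := inferInstance
  μ := μA.prod μU
  prob := measure_univ
  f v x ω := if v = 0 then ω.1 else g (x 0) ω.2
  localDep v x y h := by
    by_cases hv : v = 0
    · simp [hv]
    · simp [hv, h 0 ⟨rfl, by omega⟩]

section noiseStructure

variable (μA μU : Measure (Fin 2)) [IsProbabilityMeasure μA] [IsProbabilityMeasure μU]
  (g : Fin 2 → Fin 2 → Fin 2)

theorem noiseStructure_mwm : MWM (noiseStructure μA μU g) :=
  mwm_of_indep_fin_two _ fun g₀ g₁ =>
    Measure.prod_setOf_fst_and_snd μA μU (fun a => (fun _ => a) = g₀)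
      (fun u => (fun x => g (x 0) u) = g₁)

theorem noiseStructure_observed_zero :
    observed edgeAB_acyclic (noiseStructure μA μU g) 0 = Prod.fst :=
  funext fun ω => observed_eq_of_parents edgeAB_acyclic (noiseStructure μA μU g) (v := 0)
    (fun _ => 0) ω fun _ hw => absurd hw.2 (by decide)

theorem noiseStructure_observed_one :
    observed edgeAB_acyclic (noiseStructure μA μU g) 1 = fun ω : Fin 2 × Fin 2 => g ω.1 ω.2 :=
  funext fun ω => observed_eq_of_parents edgeAB_acyclic (noiseStructure μA μU g) (v := 1)
    (fun _ => ω.1) ω fun w hw => by rw [hw.1, noiseStructure_observed_zero]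

theorem noiseStructure_nodeResp (a : Fin 2) :
    nodeResp edgeAB_acyclic (noiseStructure μA μU g) {0} (fun _ => a) 1 =
      fun ω : Fin 2 × Fin 2 => g a ω.2 :=
  funext fun ω => nodeResp_eq_of_parents edgeAB_acyclic (noiseStructure μA μU g) (v := 1)
    (fun _ => a) ω fun w hw => by simp [hw.1]

theorem noiseStructure_obsDist (s : ∀ _ : Fin 2, Fin 2) :
    obsDist edgeAB_acyclic (noiseStructure μA μU g) s =
      μA {s 0} * μU {u | g (s 0) u = s 1} := by
  rw [obsDist, ← Measure.prod_prod]
  refine congrArg (μA.prod μU) (Set.ext fun ω => ?_)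
  simp only [Set.mem_ofPred_eq, Fin.forall_fin_two, noiseStructure_observed_zero,
    noiseStructure_observed_one]
  exact and_congr_right fun h₀ => by rw [h₀]; rfl

theorem noiseStructure_jointBB (a a' : Fin 2) (st : Fin 2 × Fin 2) :
    jointBB a a' (noiseStructure μA μU g) st = μU {u | g a u = st.1 ∧ g a' u = st.2} := by
  rw [jointBB, noiseStructure_nodeResp, noiseStructure_nodeResp]
  change (μA.prod μU) {ω | g a ω.2 = st.1 ∧ g a' ω.2 = st.2} = _
  have hset : {ω : Fin 2 × Fin 2 | g a ω.2 = st.1 ∧ g a' ω.2 = st.2} =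
      Set.univ ×ˢ {u | g a u = st.1 ∧ g a' u = st.2} := by
    ext
    simp
  rw [hset, Measure.prod_prod, measure_univ, one_mul]

theorem noiseStructure_jointBnat (a : Fin 2) (st : Fin 2 × Fin 2) :
    jointBnat a (noiseStructure μA μU g) st =
      (μA.prod μU) {ω | g a ω.2 = st.1 ∧ g ω.1 ω.2 = st.2} := by
  rw [jointBnat, noiseStructure_nodeResp, noiseStructure_observed_one]
  rfl

end noiseStructure

noncomputable def coin : Measure (Fin 2) := (PMF.uniformOfFintype (Fin 2)).toMeasure

instance : IsProbabilityMeasure coin := by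
  unfold coin
  infer_instance

theorem coin_singleton (x : Fin 2) : coin {x} = 2⁻¹ := by
  rw [coin, PMF.toMeasure_apply_singleton _ _ (measurableSet_singleton x),
    PMF.uniformOfFintype_apply]
  simp

theorem coin_ne_zero_of_mem {s : Set (Fin 2)} {x : Fin 2} (hx : x ∈ s) : coin s ≠ 0 :=
  fun h => by simpa [coin_singleton] using measure_mono_null (Set.singleton_subset_iff.2 hx) h

theorem coin_prod_ne_zero_of_mem {s : Set (Fin 2 × Fin 2)} {x : Fin 2 × Fin 2} (hx : x ∈ s) :
    (coin.prod coin) s ≠ 0 := fun h => by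
  have hx0 := measure_mono_null (Set.singleton_subset_iff.2 hx) h
  rw [← Prod.mk.eta (p := x), ← Set.singleton_prod_singleton, Measure.prod_prod] at hx0
  simp [coin_singleton] at hx0

noncomputable def xorStructure : CausalStructure (Fin 2) edgeAB (fun _ => Fin 2) :=
  noiseStructure coin coin (· + ·)

noncomputable def noEffectStructure : CausalStructure (Fin 2) edgeAB (fun _ => Fin 2) :=
  noiseStructure coin coin fun _ u => u

theorem obsDist_xorStructure :
    obsDist edgeAB_acyclic xorStructure = obsDist edgeAB_acyclic noEffectStructure := by
  funext s
  have hsub : {u : Fin 2 | s 0 + u = s 1} = {s 1 - s 0} := by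
    ext u
    simp [eq_sub_iff_add_eq, add_comm]
  simp only [xorStructure, noEffectStructure, noiseStructure_obsDist, hsub,
    Set.ofPred_eq_eq_singleton, coin_singleton]

theorem jointBB_xorStructure_diag {a a' : Fin 2} (hne : a ≠ a') :
    jointBB a a' xorStructure (a, a) = 0 := by
  rw [xorStructure, noiseStructure_jointBB]
  convert measure_empty (μ := coin)
  refine Set.eq_empty_of_forall_notMem fun u ⟨hu, hu'⟩ => hne ?_
  rw [add_eq_left.mp hu, add_zero] at hu'
  exact hu'.symm

theorem jointBB_noEffectStructure_diag (a a' : Fin 2) :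
    jointBB a a' noEffectStructure (a, a) ≠ 0 := by
  rw [noEffectStructure, noiseStructure_jointBB]
  exact coin_ne_zero_of_mem ⟨rfl, rfl⟩

theorem jointBnat_xorStructure (a : Fin 2) : jointBnat a xorStructure (a, a + 1) ≠ 0 := by
  rw [xorStructure, noiseStructure_jointBnat]
  exact coin_prod_ne_zero_of_mem (x := (a + 1, 0)) (by simp)

theorem jointBnat_noEffectStructure (a : Fin 2) :
    jointBnat a noEffectStructure (a, a + 1) = 0 := by
  rw [noEffectStructure, noiseStructure_jointBnat]
  convert measure_empty (μ := coin.prod coin)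
  refine Set.eq_empty_of_forall_notMem fun ω ⟨hω, hω'⟩ => ?_
  exact (by decide : ∀ b : Fin 2, b ≠ b + 1) a (hω.symm.trans hω')

/-- for the graph `A → B` with binary state spaces and `a ≠ a'`, neither
`p(B(a), B(a'))` nor `p(B(a), B)` is identified from `p(A, B)` under the multiple worlds
model: there are MWM structures with the same observed distribution of `(A, B)` but
different joint distributions of these pairs. -/
theorem cross_world_non_identification (a a' : Fin 2) (hne : a ≠ a') :
    (∃ C₁ C₂ : CausalStructure (Fin 2) edgeAB (fun _ => Fin 2),
      MWM C₁ ∧ MWM C₂ ∧ obsDist edgeAB_acyclic C₁ = obsDist edgeAB_acyclic C₂ ∧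
      jointBB a a' C₁ ≠ jointBB a a' C₂) ∧
    (∃ C₁ C₂ : CausalStructure (Fin 2) edgeAB (fun _ => Fin 2),
      MWM C₁ ∧ MWM C₂ ∧ obsDist edgeAB_acyclic C₁ = obsDist edgeAB_acyclic C₂ ∧
      jointBnat a C₁ ≠ jointBnat a C₂) ∧
    ¬ (∀ C₁ C₂ : CausalStructure (Fin 2) edgeAB (fun _ => Fin 2), MWM C₁ → MWM C₂ →
        obsDist edgeAB_acyclic C₁ = obsDist edgeAB_acyclic C₂ →
        jointBB a a' C₁ = jointBB a a' C₂) ∧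
    ¬ (∀ C₁ C₂ : CausalStructure (Fin 2) edgeAB (fun _ => Fin 2), MWM C₁ → MWM C₂ →
        obsDist edgeAB_acyclic C₁ = obsDist edgeAB_acyclic C₂ →
        jointBnat a C₁ = jointBnat a C₂) := by
  have hxor : MWM xorStructure := noiseStructure_mwm _ _ _
  have hnoEffect : MWM noEffectStructure := noiseStructure_mwm _ _ _
  have hBB : jointBB a a' xorStructure ≠ jointBB a a' noEffectStructure := fun h =>
    jointBB_noEffectStructure_diag a a' (congrFun h (a, a) ▸ jointBB_xorStructure_diag hne)
  have hBnat : jointBnat a xorStructure ≠ jointBnat a noEffectStructure := fun h =>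
    jointBnat_xorStructure a (congrFun h (a, a + 1) ▸ jointBnat_noEffectStructure a)
  exact ⟨⟨_, _, hxor, hnoEffect, obsDist_xorStructure, hBB⟩,
    ⟨_, _, hxor, hnoEffect, obsDist_xorStructure, hBnat⟩,
    fun h => hBB (h _ _ hxor hnoEffect obsDist_xorStructure),
    fun h => hBnat (h _ _ hxor hnoEffect obsDist_xorStructure)⟩

end CausalHierarchy
end

section
/- Let G be a finite directed acyclic graph with vertex set 𝐕 in which every vertex has state space ℝ. For any path intervention π_{𝔞_𝛂} on a proper set of directed paths 𝛂 with real value assignments, and any vertex set 𝐘, the joint distribution of the responses {Y(𝔞_𝛂) : Y ∈ 𝐘} is identified under the linear structural equation model for G: any two linear SEM structures for G inducing the same observed distribution p(𝐕) induce the same joint distribution of {Y(𝔞_𝛂) : Y ∈ 𝐘}. -/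
/-!
In a linear SEM the observed vector solves `x = c + b x + ε`, so `ε = x - c - b x`: every response
to a path intervention, being obtained from the errors by recursive substitution, is a fixed
measurable function of the observed vector once `c` and `b` are known. It therefore suffices that
the observed law determines `c` and `b`. Its covariance matrix is `S = M diag(σ) Mᵀ` with
`M = (1 - b)⁻¹`, which is positive definite. Since `ε_v` is uncorrelated with the parents of `v`,
the row `b_v` solves the normal equations `(b_v S)_w = S_{vw}` over the parents `w`, and positive
definiteness makes their solution unique. Finally `c = (1 - b) E[x]`.
-/

open scoped Classical
open MeasureTheory

namespace CausalHierarchy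

variable {V : Type}

variable {X : V → Type}

/-- A linear structural equation model for `G`: each structural function is linear in the
parent values (coefficients vanishing off the parent set) plus an error term, where the
errors are mutually independent Gaussian random variables with strictly positive
variances. -/
def IsLinearSEM {V : Type} [Fintype V] {edge : V → V → Prop}
    (C : CausalStructure V edge (fun _ : V => ℝ)) : Prop :=
  ∃ (c : V → ℝ) (b : V → V → ℝ) (σ : V → NNReal) (ε : V → C.Ω → ℝ),
    (∀ v, σ v ≠ 0) ∧
    (∀ v w, ¬ edge w v → b v w = 0) ∧
    (∀ v x ω, C.f v x ω = c v + (∑ w, b v w * x w) + ε v ω) ∧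
    (∀ v, @Measurable C.Ω ℝ C.m _ (ε v)) ∧
    (∀ (S : Finset V) (B : V → Set ℝ), (∀ v, MeasurableSet (B v)) →
      C.μ {ω | ∀ v ∈ S, ε v ω ∈ B v} = ∏ v ∈ S, C.μ {ω | ε v ω ∈ B v}) ∧
    (∀ v (B : Set ℝ), MeasurableSet B →
      C.μ {ω | ε v ω ∈ B} = ProbabilityTheory.gaussianReal 0 (σ v) B)

open Matrix ProbabilityTheory

section TotalEffect

variable {V : Type} [Fintype V] {edge : V → V → Prop}

theorem Acyclic.exists_maximal (hG : Acyclic edge) {S : Set V} (hS : S.Nonempty) :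
    ∃ m ∈ S, ∀ u ∈ S, ¬ Relation.TransGen edge m u := by
  have hswap : Acyclic (Function.swap edge) := fun x hx => hG x (Relation.transGen_swap.mp hx)
  obtain ⟨m, hmS, hmin⟩ := hswap.wf.has_min S hS
  exact ⟨m, hmS, fun u hu hmu => hmin u hu (Relation.transGen_swap.mpr hmu)⟩

/-- The total-effect matrix `(1 - b)⁻¹` of the edge coefficients `b`, computed by recursion along
the DAG; only the coefficients `b v u` with `u` an ancestor of `v` enter. -/
noncomputable def totalEffect (hG : Acyclic edge) (b : Matrix V V ℝ) : Matrix V V ℝ :=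
  hG.wf.fix (C := fun _ => V → ℝ) fun v IH t =>
    (1 : Matrix V V ℝ) v t + ∑ u, if h : Relation.TransGen edge u v then b v u * IH u h t else 0

variable (hG : Acyclic edge) (b : Matrix V V ℝ)

theorem totalEffect_apply (v t : V) :
    totalEffect hG b v t = (1 : Matrix V V ℝ) v t +
      ∑ u, if Relation.TransGen edge u v then b v u * totalEffect hG b u t else 0 := by
  rw [totalEffect, WellFounded.fix_eq]
  simp only [dite_eq_ite]

theorem totalEffect_apply_eq_zero {v t : V} (htv : t ≠ v) (hanc : ¬ Relation.TransGen edge t v) :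
    totalEffect hG b v t = 0 := by
  induction v using hG.wf.induction with
  | _ v IH =>
    rw [totalEffect_apply, one_apply_ne htv.symm, zero_add]
    refine Finset.sum_eq_zero fun u _ => ?_
    split_ifs with hu
    · rw [IH u hu (fun h => hanc (h ▸ hu)) (fun h => hanc (h.trans hu)), mul_zero]
    · rfl

theorem totalEffect_apply_self (v : V) : totalEffect hG b v v = 1 := by
  rw [totalEffect_apply, one_apply_eq, add_eq_left]
  refine Finset.sum_eq_zero fun u _ => ?_
  split_ifs with hu
  · rw [totalEffect_apply_eq_zero hG b (fun h => hG v (by rwa [← h] at hu))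
      (fun h => hG v (h.trans hu)), mul_zero]
  · rfl

theorem one_sub_mul_totalEffect (hb : ∀ v w, ¬ edge w v → b v w = 0) :
    (1 - b) * totalEffect hG b = 1 := by
  rw [sub_mul, one_mul, sub_eq_iff_eq_add]
  ext v t
  rw [totalEffect_apply, Matrix.add_apply, mul_apply]
  congr 1
  refine Finset.sum_congr rfl fun u _ => ?_
  split_ifs with hu
  · rfl
  · rw [hb v u fun h => hu (.single h), zero_mul]

theorem totalEffect_mul_one_sub (hb : ∀ v w, ¬ edge w v → b v w = 0) :
    totalEffect hG b * (1 - b) = 1 :=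
  mul_eq_one_comm.mp (one_sub_mul_totalEffect hG b hb)

theorem injective_vecMul_totalEffect : Function.Injective (totalEffect hG b).vecMul := by
  refine (injective_iff_map_eq_zero' (vecMulLinear (totalEffect hG b))).mpr
    fun d => ⟨fun hd => ?_, fun hd => ?_⟩
  · by_contra hne
    obtain ⟨m, hm, hmax⟩ := hG.exists_maximal (S := {u | d u ≠ 0}) (Function.ne_iff.mp hne)
    -- among the rows in the support of `d`, only row `m` has a nonzero entry in column `m`
    have hdm : (d ᵥ* totalEffect hG b) m = d m := by
      rw [vecMul, dotProduct, Finset.sum_eq_single m]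
      · rw [totalEffect_apply_self, mul_one]
      · intro u _ hum
        by_cases hu : d u = 0
        · rw [hu, zero_mul]
        · rw [totalEffect_apply_eq_zero hG b (Ne.symm hum) (hmax u hu), mul_zero]
      · exact fun h => absurd (Finset.mem_univ m) h
    exact hm (hdm ▸ congrFun hd m)
  · rw [hd]; exact zero_vecMul _

end TotalEffect

section Gram

variable {V : Type} [Fintype V] {edge : V → V → Prop} (hG : Acyclic edge)

theorem mul_totalEffect_gram_apply_of_edge {b : Matrix V V ℝ} (hb : ∀ v w, ¬ edge w v → b v w = 0)
    (σ : V → ℝ) {v w : V} (hwv : edge w v) :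
    (b * (totalEffect hG b * diagonal σ * (totalEffect hG b)ᵀ)) v w =
      (totalEffect hG b * diagonal σ * (totalEffect hG b)ᵀ) v w := by
  have h : (1 - b) * (totalEffect hG b * diagonal σ * (totalEffect hG b)ᵀ) =
      diagonal σ * (totalEffect hG b)ᵀ := by
    rw [← Matrix.mul_assoc, ← Matrix.mul_assoc, one_sub_mul_totalEffect hG b hb, Matrix.one_mul]
  have hwv' : totalEffect hG b w v = 0 :=
    totalEffect_apply_eq_zero hG b (fun h => hG v (.single (h ▸ hwv)))
      (fun h => hG v (h.tail hwv))
  have hentry := congrFun (congrFun h v) w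
  rw [sub_mul, Matrix.one_mul, Matrix.sub_apply, diagonal_mul, transpose_apply, hwv', mul_zero,
    sub_eq_zero] at hentry
  exact hentry.symm

theorem eq_of_totalEffect_gram_eq {b₁ b₂ : Matrix V V ℝ} {σ₁ σ₂ : V → ℝ}
    (hb₁ : ∀ v w, ¬ edge w v → b₁ v w = 0) (hb₂ : ∀ v w, ¬ edge w v → b₂ v w = 0)
    (hσ₁ : ∀ t, 0 < σ₁ t)
    (h : totalEffect hG b₁ * diagonal σ₁ * (totalEffect hG b₁)ᵀ =
      totalEffect hG b₂ * diagonal σ₂ * (totalEffect hG b₂)ᵀ) :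
    b₁ = b₂ := by
  ext v u
  -- with `S` the common Gram matrix, both rows `b₁ v` and `b₂ v` solve the normal equations
  -- `(b v ᵥ* S) w = S v w` over the parents `w` of `v`
  have hnormal : ∀ w, edge w v →
      ((b₁ - b₂) * (totalEffect hG b₁ * diagonal σ₁ * (totalEffect hG b₁)ᵀ)) v w = 0 := by
    intro w hwv
    rw [sub_mul, Matrix.sub_apply, mul_totalEffect_gram_apply_of_edge hG hb₁ σ₁ hwv, h,
      mul_totalEffect_gram_apply_of_edge hG hb₂ σ₂ hwv, sub_self]
  set S := totalEffect hG b₁ * diagonal σ₁ * (totalEffect hG b₁)ᵀ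
  have hS : S.PosDef := by
    simpa [conjTranspose_eq_transpose_of_trivial] using
      (PosDef.diagonal hσ₁).mul_mul_conjTranspose_same (injective_vecMul_totalEffect hG b₁)
  set d := (b₁ - b₂) v
  suffices hd : d = 0 from sub_eq_zero.mp (congrFun hd u)
  have hquad : d ᵥ* S ⬝ᵥ d = 0 := by
    refine Finset.sum_eq_zero fun w _ => ?_
    by_cases hwv : edge w v
    · exact mul_eq_zero_of_left (hnormal w hwv) _
    · simp [d, hb₁ v w hwv, hb₂ v w hwv]
  by_contra hd
  have hpos := hS.dotProduct_mulVec_pos hd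
  rw [star_trivial, dotProduct_mulVec, hquad] at hpos
  exact lt_irrefl 0 hpos

end Gram

theorem covariance_sum_mul_sum {Ω ι : Type*} [MeasurableSpace Ω] {μ : Measure Ω}
    [IsProbabilityMeasure μ] [Fintype ι] {X : ι → Ω → ℝ} (hX : ∀ i, MemLp (X i) 2 μ)
    (p q : ι → ℝ) :
    cov[fun ω => ∑ i, p i * X i ω, fun ω => ∑ j, q j * X j ω; μ] =
      ∑ i, ∑ j, p i * q j * cov[X i, X j; μ] := by
  rw [covariance_fun_sum_fun_sum (fun i => (hX i).const_mul (p i))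
    (fun j => (hX j).const_mul (q j))]
  simp only [covariance_const_mul_left, covariance_const_mul_right]
  exact Finset.sum_congr rfl fun i _ => Finset.sum_congr rfl fun j _ => by ring

section Recursion

variable {V : Type} [Finite V] {edge : V → V → Prop} {X : V → Type} [∀ v, Nonempty (X v)]

/-- `pathResp` for deterministic structural functions `f`. -/
noncomputable def detPathResp (hG : Acyclic edge) (f : ∀ v, (∀ w, X w) → X v)
    (A : Set (DiPath edge)) (a : DiPath edge → ∀ u, X u) (v : V) : X v :=
  hG.wf.fix (C := fun u => Set (DiPath edge) → (DiPath edge → ∀ z, X z) → X u)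
    (fun v IH A a => f v fun w =>
      if h : ∃ p ∈ A, p.verts = [w, v] then a h.choose w
      else if hw : Relation.TransGen edge w v then IH w hw (funnel w v A) (funnelAssign w v A a)
      else Classical.arbitrary (X w)) v A a

variable (hG : Acyclic edge)

theorem observed_eq_f (C : CausalStructure V edge X) (v : V) (ω : C.Ω) :
    observed hG C v ω = C.f v (fun w => observed hG C w ω) ω := by
  rw [observed, WellFounded.fix_eq]
  exact congrFun (C.localDep v _ _ fun w hw => dif_pos (.single hw)) ω

theorem detPathResp_eq (f : ∀ v, (∀ w, X w) → X v) (A : Set (DiPath edge))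
    (a : DiPath edge → ∀ u, X u) (v : V) :
    detPathResp hG f A a v = f v fun w =>
      if h : ∃ p ∈ A, p.verts = [w, v] then a h.choose w
      else if Relation.TransGen edge w v then
        detPathResp hG f (funnel w v A) (funnelAssign w v A a) w
      else Classical.arbitrary (X w) := by
  rw [detPathResp, WellFounded.fix_eq]
  rfl

theorem pathResp_eq_detPathResp (C : CausalStructure V edge X) (A : Set (DiPath edge))
    (a : DiPath edge → ∀ u, X u) (v : V) (ω : C.Ω) :
    pathResp hG C A a v ω = detPathResp hG (fun v x => C.f v x ω) A a v := by
  induction v using hG.wf.induction generalizing A a with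
  | _ v IH =>
    rw [pathResp, WellFounded.fix_eq, detPathResp_eq]
    congr 1
    funext w
    split_ifs with _ hw
    · rfl
    · exact IH w hw _ _
    · rfl

theorem measurable_detPathResp {E : Type*} [MeasurableSpace E] {f : E → V → (V → ℝ) → ℝ}
    (hf : ∀ v, Measurable fun p : E × (V → ℝ) => f p.1 v p.2) (A : Set (DiPath edge))
    (a : DiPath edge → V → ℝ) (v : V) :
    Measurable fun e => detPathResp hG (f e) A a v := by
  induction v using hG.wf.induction generalizing A a with
  | _ v IH =>
    have harg : ∀ w, Measurable fun e =>
        if h : ∃ p ∈ A, p.verts = [w, v] then a h.choose w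
        else if Relation.TransGen edge w v then
          detPathResp hG (f e) (funnel w v A) (funnelAssign w v A a) w
        else Classical.arbitrary ℝ := by
      intro w
      by_cases hA : ∃ p ∈ A, p.verts = [w, v]
      · simpa only [dif_pos hA] using measurable_const
      by_cases hw : Relation.TransGen edge w v
      · simpa only [dif_neg hA, if_pos hw] using IH w hw _ _
      · simpa only [dif_neg hA, if_neg hw] using measurable_const
    simp_rw [detPathResp_eq hG (f _) A a v]
    exact (hf v).comp (measurable_id.prodMk (measurable_pi_lambda _ harg))

end Recursion

section LinearSEM

variable {V : Type} [Fintype V] {edge : V → V → Prop}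

instance CausalStructure.instMeasurableSpace {X : V → Type} (C : CausalStructure V edge X) :
    MeasurableSpace C.Ω := C.m

instance CausalStructure.isProbabilityMeasure {X : V → Type} (C : CausalStructure V edge X) :
    IsProbabilityMeasure C.μ := ⟨C.prob⟩

/-- `IsLinearSEM` with its parameters exposed, and the independence and the laws of the
errors stated with Mathlib's notions. -/
structure IsLinearSEMWith (C : CausalStructure V edge (fun _ : V => ℝ)) (c : V → ℝ)
    (b : Matrix V V ℝ) (σ : V → NNReal) (ε : V → C.Ω → ℝ) : Prop where
  variance_ne_zero : ∀ v, σ v ≠ 0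
  coeff_eq_zero : ∀ v w, ¬ edge w v → b v w = 0
  f_eq : ∀ v x ω, C.f v x ω = c v + (b *ᵥ x) v + ε v ω
  measurable_error : ∀ v, Measurable (ε v)
  iIndepFun_error : iIndepFun ε C.μ
  map_error : ∀ v, C.μ.map (ε v) = gaussianReal 0 (σ v)

theorem IsLinearSEM.exists_isLinearSEMWith {C : CausalStructure V edge (fun _ : V => ℝ)}
    (h : IsLinearSEM C) : ∃ c b σ ε, IsLinearSEMWith C c b σ ε := by
  obtain ⟨c, b, σ, ε, hσ, hb, hf, hm, hrect, hlaw⟩ := h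
  refine ⟨c, b, σ, ε, ⟨hσ, hb, hf, hm, ?_, fun v => ?_⟩⟩
  · refine (iIndepFun_iff_measure_inter_preimage_eq_mul).mpr fun S sets hsets => ?_
    let B : V → Set ℝ := fun v => if v ∈ S then sets v else Set.univ
    have hB : ∀ v, MeasurableSet (B v) := fun v => by
      by_cases hv : v ∈ S <;> simp [B, hv, hsets]
    convert hrect S B hB using 1
    · congr 1; ext ω; simp +contextual [B]
    · refine Finset.prod_congr rfl fun v hv => ?_
      simp [B, hv, Set.preimage]
  · ext B hB
    rw [Measure.map_apply (hm v) hB]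
    exact hlaw v B hB

/-- The observed distribution `p(𝐕)` as a measure on `V → ℝ`. -/
noncomputable def observedLaw (hG : Acyclic edge)
    (C : CausalStructure V edge (fun _ : V => ℝ)) : Measure (V → ℝ) :=
  C.μ.map fun ω v => observed hG C v ω
def linearMech (c : V → ℝ) (b : Matrix V V ℝ) (e : V → ℝ) (v : V) (x : V → ℝ) : ℝ :=
  c v + (b *ᵥ x) v + e v

noncomputable def linearPathResp (hG : Acyclic edge) (c : V → ℝ) (b : Matrix V V ℝ)
    (A : Set (DiPath edge)) (a : DiPath edge → V → ℝ) (Y : Set V) (x : V → ℝ) : Y → ℝ :=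
  fun y => detPathResp hG (linearMech c b (x - c - b *ᵥ x)) A a y

theorem measurable_linearPathResp (hG : Acyclic edge) (c : V → ℝ) (b : Matrix V V ℝ)
    (A : Set (DiPath edge)) (a : DiPath edge → V → ℝ) (Y : Set V) :
    Measurable (linearPathResp hG c b A a Y) := by
  refine measurable_pi_lambda _ fun y => measurable_detPathResp hG (fun v => ?_) A a y
  unfold linearMech
  fun_prop

end LinearSEM

namespace IsLinearSEMWith

variable {V : Type} [Fintype V] {edge : V → V → Prop} {hG : Acyclic edge}
  {C : CausalStructure V edge (fun _ : V => ℝ)} {c : V → ℝ} {b : Matrix V V ℝ} {σ : V → NNReal}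
  {ε : V → C.Ω → ℝ}

theorem memLp_error (h : IsLinearSEMWith C c b σ ε) (v : V) : MemLp (ε v) 2 C.μ := by
  have hid : MemLp id 2 (C.μ.map (ε v)) := h.map_error v ▸ memLp_id_gaussianReal 2
  exact (memLp_map_measure_iff aestronglyMeasurable_id (h.measurable_error v).aemeasurable).mp hid

theorem integral_error (h : IsLinearSEMWith C c b σ ε) (v : V) : ∫ ω, ε v ω ∂C.μ = 0 := by
  have hmap := integral_map (μ := C.μ) (f := fun x => x) (h.measurable_error v).aemeasurable
    aestronglyMeasurable_id
  rw [h.map_error v, integral_id_gaussianReal] at hmap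
  exact hmap.symm

theorem covariance_error (h : IsLinearSEMWith C c b σ ε) (s t : V) :
    cov[ε s, ε t; C.μ] = if s = t then (σ s : ℝ) else 0 := by
  split_ifs with hst
  · subst hst
    rw [covariance_self (h.measurable_error s).aemeasurable, ← variance_id_gaussianReal (μ := 0),
      ← h.map_error s, variance_map aemeasurable_id (h.measurable_error s).aemeasurable]
    rfl
  · exact (h.iIndepFun_error.indepFun hst).covariance_eq_zero (h.memLp_error s) (h.memLp_error t)

theorem observed_eq_add_mulVec (h : IsLinearSEMWith C c b σ ε) (ω : C.Ω) :
    (fun v => observed hG C v ω) = c + b *ᵥ (fun v => observed hG C v ω) + fun v => ε v ω :=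
  funext fun v => (observed_eq_f hG C v ω).trans (h.f_eq v _ ω)

theorem observed_eq_mulVec (h : IsLinearSEMWith C c b σ ε) (ω : C.Ω) :
    (fun v => observed hG C v ω) = totalEffect hG b *ᵥ (c + fun v => ε v ω) := by
  have hsolve : (1 - b) *ᵥ (fun v => observed hG C v ω) = c + fun v => ε v ω := by
    rw [sub_mulVec, one_mulVec, sub_eq_iff_eq_add, add_right_comm]
    exact h.observed_eq_add_mulVec ω
  rw [← hsolve, mulVec_mulVec, totalEffect_mul_one_sub hG b h.coeff_eq_zero, one_mulVec]

theorem observed_eq_sum (h : IsLinearSEMWith C c b σ ε) (v : V) :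
    observed hG C v = fun ω => (totalEffect hG b *ᵥ c) v + ∑ t, totalEffect hG b v t * ε t ω :=
  funext fun ω => (congrFun (h.observed_eq_mulVec ω) v).trans (by rw [mulVec_add]; rfl)

theorem measurable_observed (h : IsLinearSEMWith C c b σ ε) :
    Measurable fun ω v => observed hG C v ω :=
  measurable_pi_lambda _ fun v => h.observed_eq_sum v ▸
    measurable_const.add (Finset.measurable_sum _ fun t _ => (h.measurable_error t).const_mul _)

theorem integral_observed (h : IsLinearSEMWith C c b σ ε) (v : V) :
    ∫ ω, observed hG C v ω ∂C.μ = (totalEffect hG b *ᵥ c) v := by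
  have hint : ∀ t, Integrable (fun ω => totalEffect hG b v t * ε t ω) C.μ :=
    fun t => ((h.memLp_error t).integrable one_le_two).const_mul _
  rw [h.observed_eq_sum v,
    integral_add (integrable_const _) (integrable_finsetSum _ fun t _ => hint t),
    integral_finsetSum _ fun t _ => hint t]
  simp [integral_const_mul, h.integral_error]

theorem covariance_observed (h : IsLinearSEMWith C c b σ ε) (v w : V) :
    cov[observed hG C v, observed hG C w; C.μ] =
      (totalEffect hG b * diagonal (fun t => (σ t : ℝ)) * (totalEffect hG b)ᵀ) v w := by
  have hint : ∀ u, Integrable (fun ω => ∑ t, totalEffect hG b u t * ε t ω) C.μ :=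
    fun u => integrable_finsetSum _ fun t _ =>
      ((h.memLp_error t).integrable one_le_two).const_mul _
  rw [h.observed_eq_sum v, h.observed_eq_sum w, covariance_const_add_left (hint v),
    covariance_const_add_right (hint w), covariance_sum_mul_sum h.memLp_error, mul_apply]
  simp only [h.covariance_error, mul_ite, mul_zero, Finset.sum_ite_eq, Finset.mem_univ, if_true,
    mul_diagonal, transpose_apply]
  exact Finset.sum_congr rfl fun t _ => by ring

theorem observedLaw_apply (h : IsLinearSEMWith C c b σ ε) {B : Set (V → ℝ)}
    (hB : MeasurableSet B) :
    observedLaw hG C B = C.μ {ω | (fun v => observed hG C v ω) ∈ B} :=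
  Measure.map_apply h.measurable_observed hB

theorem integral_observedLaw (h : IsLinearSEMWith C c b σ ε) (v : V) :
    ∫ x, x v ∂observedLaw hG C = (totalEffect hG b *ᵥ c) v := by
  rw [observedLaw, integral_map h.measurable_observed.aemeasurable
    (measurable_pi_apply v).aestronglyMeasurable]
  exact h.integral_observed v

theorem covariance_observedLaw (h : IsLinearSEMWith C c b σ ε) (v w : V) :
    cov[fun x => x v, fun x => x w; observedLaw hG C] =
      (totalEffect hG b * diagonal (fun t => (σ t : ℝ)) * (totalEffect hG b)ᵀ) v w := by
  rw [observedLaw, covariance_map (measurable_pi_apply v).aestronglyMeasurable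
    (measurable_pi_apply w).aestronglyMeasurable h.measurable_observed.aemeasurable]
  exact h.covariance_observed v w

theorem eq_of_observedLaw_eq {C₂ : CausalStructure V edge (fun _ : V => ℝ)} {c₂ : V → ℝ}
    {b₂ : Matrix V V ℝ} {σ₂ : V → NNReal} {ε₂ : V → C₂.Ω → ℝ}
    (h : IsLinearSEMWith C c b σ ε) (h₂ : IsLinearSEMWith C₂ c₂ b₂ σ₂ ε₂)
    (hP : observedLaw hG C = observedLaw hG C₂) : c = c₂ ∧ b = b₂ := by
  obtain rfl : b = b₂ := eq_of_totalEffect_gram_eq hG h.coeff_eq_zero h₂.coeff_eq_zero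
    (fun t => NNReal.coe_pos.mpr (pos_iff_ne_zero.mpr (h.variance_ne_zero t))) <| by
      ext v w
      rw [← h.covariance_observedLaw, hP, h₂.covariance_observedLaw]
  have hmean : totalEffect hG b *ᵥ c = totalEffect hG b *ᵥ c₂ := by
    ext v
    rw [← h.integral_observedLaw, hP, h₂.integral_observedLaw]
  refine ⟨?_, rfl⟩
  have hsolve := congrArg ((1 - b) *ᵥ ·) hmean
  simp only [mulVec_mulVec] at hsolve
  rwa [one_sub_mul_totalEffect hG b h.coeff_eq_zero, one_mulVec, one_mulVec] at hsolve

theorem pathResp_eq (h : IsLinearSEMWith C c b σ ε) (A : Set (DiPath edge))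
    (a : DiPath edge → V → ℝ) (Y : Set V) (ω : C.Ω) :
    (fun y : Y => pathResp hG C A a y ω) =
      linearPathResp hG c b A a Y fun v => observed hG C v ω := by
  have herr : ((fun v => observed hG C v ω) - c - b *ᵥ fun v => observed hG C v ω) =
      fun v => ε v ω := by
    rw [sub_sub, sub_eq_iff_eq_add']
    exact h.observed_eq_add_mulVec ω
  funext y
  rw [pathResp_eq_detPathResp, linearPathResp, herr]
  congr with v x
  exact h.f_eq v x ω

theorem measure_pathResp_mem (h : IsLinearSEMWith C c b σ ε) (A : Set (DiPath edge))
    (a : DiPath edge → V → ℝ) {Y : Set V} {B : Set (Y → ℝ)} (hB : MeasurableSet B) :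
    C.μ {ω | (fun y : Y => pathResp hG C A a y ω) ∈ B} =
      observedLaw hG C (linearPathResp hG c b A a Y ⁻¹' B) := by
  rw [h.observedLaw_apply (measurable_linearPathResp hG c b A a Y hB)]
  simp only [h.pathResp_eq]
  rfl

end IsLinearSEMWith

theorem linear_sem_path_identified_general {V : Type} [Fintype V] {edge : V → V → Prop}
    (hG : Acyclic edge) (A : Set (DiPath edge))
    (a : DiPath edge → V → ℝ) (Y : Set V) :
    ∀ C₁ C₂ : CausalStructure V edge (fun _ : V => ℝ),
      IsLinearSEM C₁ → IsLinearSEM C₂ →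
      (∀ B : Set (V → ℝ), MeasurableSet B →
        C₁.μ {ω | (fun v => observed hG C₁ v ω) ∈ B} =
          C₂.μ {ω | (fun v => observed hG C₂ v ω) ∈ B}) →
      (∀ B : Set (↥Y → ℝ), MeasurableSet B →
        C₁.μ {ω | (fun y : ↥Y => pathResp hG C₁ A a (y : V) ω) ∈ B} =
          C₂.μ {ω | (fun y : ↥Y => pathResp hG C₂ A a (y : V) ω) ∈ B}) := by
  intro C₁ C₂ h₁ h₂ hobs B hB
  obtain ⟨c₁, b₁, σ₁, ε₁, h₁⟩ := h₁.exists_isLinearSEMWith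
  obtain ⟨c₂, b₂, σ₂, ε₂, h₂⟩ := h₂.exists_isLinearSEMWith
  have hP : observedLaw hG C₁ = observedLaw hG C₂ := Measure.ext fun B hB => by
    rw [h₁.observedLaw_apply hB, h₂.observedLaw_apply hB, hobs B hB]
  obtain ⟨rfl, rfl⟩ := h₁.eq_of_observedLaw_eq h₂ hP
  rw [h₁.measure_pathResp_mem A a hB, h₂.measure_pathResp_mem A a hB, hP]

/-- in a linear SEM every response to a path intervention is identified: two
linear SEM structures for `G` with the same observed distribution induce the same joint
distribution of the responses `{Y(𝔞_𝛂) : Y ∈ 𝐘}` for any path intervention `π_{𝔞_𝛂}`. -/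
theorem linear_sem_path_identified {V : Type} [Fintype V] {edge : V → V → Prop}
    (hG : Acyclic edge) (A : Set (DiPath edge)) (hA : Proper A)
    (a : DiPath edge → V → ℝ) (Y : Set V) :
    ∀ C₁ C₂ : CausalStructure V edge (fun _ : V => ℝ),
      IsLinearSEM C₁ → IsLinearSEM C₂ →
      (∀ B : Set (V → ℝ), MeasurableSet B →
        C₁.μ {ω | (fun v => observed hG C₁ v ω) ∈ B} =
          C₂.μ {ω | (fun v => observed hG C₂ v ω) ∈ B}) →
      (∀ B : Set (↥Y → ℝ), MeasurableSet B →
        C₁.μ {ω | (fun y : ↥Y => pathResp hG C₁ A a (y : V) ω) ∈ B} =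
          C₂.μ {ω | (fun y : ↥Y => pathResp hG C₂ A a (y : V) ω) ∈ B}) :=
  linear_sem_path_identified_general hG A a Y

end CausalHierarchy
end
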